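/- arXiv:1710.08094 — 4 statements merged into one kernel-verified Lean document; each statement's English description precedes it below -/
import Mathlib

section
/- Let A be a finite group, S a normal subgroup of A whose index [A : S] is a power of 2, Q a Sylow 2-subgroup of A, and P = S ∩ Q. Suppose that N_S(P) is the internal direct product of P with a subgroup V of S of odd order; that is, V has odd order, every element of V commutes with every element of P, P ∩ V = {1}, and N_S(P) = P·V. Then N_A(Q) is the internal direct product of Q and C_V(Q) := V ∩ C_A(Q): every element of V ∩ C_A(Q) commutes with every element of Q, Q ∩ (V ∩ C_A(Q)) = {1}, and N_A(Q) = Q·(V ∩ C_A(Q)). -/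
/-!
Since `S` has `2`-power index, `S Q = A`, so every `x ∈ N_A(Q)` is `s q` with
`s ∈ N_S(Q) ≤ N_S(P)`, hence `s = p v` with `v ∈ V` normalizing `Q`. For `q ∈ Q` the element
`c = q⁻¹ (v q v⁻¹)` lies in `P`, so it commutes with `v`; then `v ^ n` conjugates `q` to `q c ^ n`,
and taking `n` the odd order of `v` kills the `2`-element `c`. Thus `v` centralizes `Q`.
-/

open Subgroup
open scoped Pointwise

section
variable {G : Type*} [Group G]

theorem conj_pow_eq_mul_pow_of_commute {v q c : G} (h : v * q * v⁻¹ = q * c) (hvc : Commute v c)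
    (n : ℕ) : v ^ n * q * (v ^ n)⁻¹ = q * c ^ n := by
  induction n with
  | zero => simp
  | succ n ih =>
    calc v ^ (n + 1) * q * (v ^ (n + 1))⁻¹ = v * (v ^ n * q * (v ^ n)⁻¹) * v⁻¹ := by group
      _ = (v * q * v⁻¹) * (v * c ^ n * v⁻¹) := by rw [ih]; group
      _ = q * c ^ (n + 1) := by
        rw [h, (hvc.pow_right n).eq, mul_inv_cancel_right, mul_assoc, ← pow_succ']

theorem eq_one_of_conj_eq_mul_of_coprime {v q c : G} (h : v * q * v⁻¹ = q * c)
    (hvc : Commute v c) (hco : (orderOf v).Coprime (orderOf c)) : c = 1 := by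
  have hc : c ^ orderOf v = 1 := by
    simpa [pow_orderOf_eq_one] using (conj_pow_eq_mul_pow_of_commute h hvc (orderOf v)).symm
  exact orderOf_eq_one_iff.mp
    (Nat.eq_one_of_dvd_coprimes hco (orderOf_dvd_of_pow_eq_one hc) dvd_rfl)

theorem mem_centralizer_of_commute_inf {p : ℕ} {S Q : Subgroup G} [hS : S.Normal]
    (hQ : IsPGroup p Q) {v : G} (hvS : v ∈ S) (hvN : v ∈ normalizer (Q : Set G))
    (hvp : (orderOf v).Coprime p) (hcomm : ∀ x ∈ S ⊓ Q, Commute v x) :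
    v ∈ centralizer (Q : Set G) := by
  refine mem_centralizer_iff.mpr fun q hq ↦ ?_
  set c := q⁻¹ * (v * q * v⁻¹) with hc_def
  have hcQ : c ∈ Q := mul_mem (inv_mem hq) ((mem_normalizer_iff.mp hvN q).mp hq)
  have hcS : c ∈ S := by
    simpa only [hc_def, mul_assoc, inv_inv] using
      mul_mem (hS.conj_mem v hvS q⁻¹) (inv_mem hvS)
  have hconj : v * q * v⁻¹ = q * c := by rw [hc_def, mul_inv_cancel_left]
  have hco : (orderOf v).Coprime (orderOf c) := by
    simpa only [orderOf_mk] using (hQ.orderOf_coprime hvp.symm ⟨c, hcQ⟩).symm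
  rw [eq_one_of_conj_eq_mul_of_coprime hconj (hcomm c ⟨hcS, hcQ⟩) hco, mul_one,
    mul_inv_eq_iff_eq_mul] at hconj
  exact hconj.symm

theorem Sylow.sup_eq_top_of_index_eq_pow {p k : ℕ} [Fact p.Prime] [Finite G] {S : Subgroup G}
    (hS : S.index = p ^ k) (Q : Sylow p G) : S ⊔ Q = ⊤ :=
  index_eq_one.mp <| Nat.eq_one_of_dvd_coprimes
    (((Nat.Prime.coprime_iff_not_dvd Fact.out).mpr Q.not_dvd_index).pow_left k)
    (hS ▸ index_dvd_of_le le_sup_left) (index_dvd_of_le le_sup_right)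

theorem exists_mem_inf_normalizer_mul_of_sup_eq_top {S Q : Subgroup G} [S.Normal]
    (hSQ : S ⊔ Q = ⊤) {x : G} (hx : x ∈ normalizer (Q : Set G)) :
    ∃ s ∈ S ⊓ normalizer (Q : Set G), ∃ q ∈ Q, x = s * q := by
  have hx' : x ∈ (S : Set G) * (Q : Set G) := by rw [← normal_mul, hSQ]; trivial
  obtain ⟨s, hs, q, hq, rfl⟩ := hx'
  refine ⟨s, ⟨hs, ?_⟩, q, hq, rfl⟩
  simpa using mul_mem hx (inv_mem (le_normalizer hq))

theorem normalizer_le_normalizer_inf_of_normal {S : Subgroup G} [S.Normal] (Q : Subgroup G) :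
    normalizer (Q : Set G) ≤ normalizer ((S ⊓ Q : Subgroup G) : Set G) :=
  fun _ hs ↦ inf_normalizer_le_normalizer_inf ⟨le_normalizer_of_normal (K := ⊤) (mem_top _), hs⟩

end

/-- Let `A` be a finite group, `S` a normal subgroup of `2`-power index, `Q` a Sylow
`2`-subgroup of `A`, and `P = S ⊓ Q`. If `N_S(P) = P × V` with `V ≤ S` of odd order,
then `N_A(Q) = Q × C_V(Q)` where `C_V(Q) = V ⊓ C_A(Q)`. -/
theorem stmt3 {A : Type*} [Group A] [Fintype A] (S : Subgroup A) [S.Normal]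
    (hidx : ∃ k : ℕ, S.index = 2 ^ k) (Q : Sylow 2 A) (V : Subgroup A) (hVS : V ≤ S)
    (hVodd : Odd (Nat.card V))
    (hcomm : ∀ v ∈ V, ∀ p ∈ S ⊓ (Q : Subgroup A), Commute v p)
    (hPV : (S ⊓ (Q : Subgroup A)) ⊓ V = ⊥)
    (hNSP : ∀ x : A, x ∈ S ⊓ Subgroup.normalizer ((S ⊓ (Q : Subgroup A) : Subgroup A) : Set A) ↔
      ∃ p ∈ S ⊓ (Q : Subgroup A), ∃ v ∈ V, x = p * v) :
    (∀ w ∈ V ⊓ Subgroup.centralizer ((Q : Subgroup A) : Set A), ∀ q ∈ (Q : Subgroup A),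
        Commute w q) ∧
      (Q : Subgroup A) ⊓ (V ⊓ Subgroup.centralizer ((Q : Subgroup A) : Set A)) = ⊥ ∧
      (∀ x : A, x ∈ Subgroup.normalizer ((Q : Subgroup A) : Set A) ↔
        ∃ q ∈ (Q : Subgroup A),
          ∃ w ∈ V ⊓ Subgroup.centralizer ((Q : Subgroup A) : Set A), x = q * w) := by
  refine ⟨fun w hw q hq ↦ (mem_centralizer_iff.mp hw.2 q hq).symm, ?_, fun x ↦ ⟨fun hx ↦ ?_, ?_⟩⟩
  · rw [eq_bot_iff]
    rintro x ⟨hxQ, hxV, -⟩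
    exact hPV ▸ ⟨⟨hVS hxV, hxQ⟩, hxV⟩
  · obtain ⟨k, hk⟩ := hidx
    obtain ⟨s, ⟨hsS, hsN⟩, q, hq, rfl⟩ :=
      exists_mem_inf_normalizer_mul_of_sup_eq_top (Sylow.sup_eq_top_of_index_eq_pow hk Q) hx
    obtain ⟨p, hp, v, hv, rfl⟩ :=
      (hNSP s).mp ⟨hsS, normalizer_le_normalizer_inf_of_normal _ hsN⟩
    have hvN : v ∈ normalizer (Q : Set A) := by
      simpa using mul_mem (inv_mem (le_normalizer hp.2)) hsN
    have hvodd : Odd (orderOf v) := hVodd.of_dvd_nat (orderOf_dvd_natCard V hv)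
    have hvC : v ∈ centralizer (Q : Set A) :=
      mem_centralizer_of_commute_inf Q.isPGroup' (hVS hv) hvN hvodd.coprime_two_right (hcomm v hv)
    refine ⟨p * q, mul_mem hp.2 hq, v, ⟨hv, hvC⟩, ?_⟩
    rw [mul_assoc, mul_assoc, mem_centralizer_iff.mp hvC q hq]
  · rintro ⟨q, hq, w, ⟨-, hwC⟩, rfl⟩
    exact mul_mem (le_normalizer hq) (centralizer_le_normalizer _ hwC)
end

section
/- Let A be a finite group, S a normal subgroup of A whose index [A : S] is a power of 2, Q a Sylow 2-subgroup of A, and P = S ∩ Q. If the Sylow 2-subgroup P of S is self-normalizing in S, i.e. N_S(P) = P, then Q is self-normalizing in A, i.e. N_A(Q) = Q. -/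
/-!
Take `x ∈ N_A(Q)`. Since `S` is normal, `x` also normalizes `P = S ∩ Q`, and since `A/S` is a
`2`-group, some power `x ^ 2 ^ k` lies in `S`; hence `x ^ 2 ^ k ∈ N_S(P) = P ≤ Q`. So `x` has
`2`-power order, and a `2`-element normalizing the Sylow subgroup `Q` lies in `Q`.
-/

open Subgroup

theorem IsPGroup.zpowers_of_pow_mem {p : ℕ} {G : Type*} [Group G] {P : Subgroup G}
    (hP : IsPGroup p P) {x : G} {k : ℕ} (hx : x ^ p ^ k ∈ P) : IsPGroup p (zpowers x) := by
  rintro ⟨_, m, rfl⟩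
  obtain ⟨n, hn⟩ := hP ⟨_, hx⟩
  have hpow : x ^ p ^ (k + n) = 1 := by
    rw [pow_add, pow_mul]
    exact congrArg Subtype.val hn
  refine ⟨k + n, Subtype.ext ?_⟩
  change (x ^ m) ^ p ^ (k + n) = 1
  rw [← zpow_natCast, ← zpow_mul, mul_comm, zpow_mul, zpow_natCast, hpow, one_zpow]

theorem Sylow.mem_of_mem_normalizer_of_pow_mem {p : ℕ} {G : Type*} [Group G] (Q : Sylow p G)
    {x : G} (hx : x ∈ normalizer (Q : Set G)) {k : ℕ} (hk : x ^ p ^ k ∈ Q) : x ∈ Q := by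
  have hinf := (Q.isPGroup'.zpowers_of_pow_mem hk).inf_normalizer_sylow Q
  have hx' : x ∈ zpowers x ⊓ normalizer (Q : Set G) := ⟨mem_zpowers x, hx⟩
  exact (hinf ▸ hx').2

theorem Subgroup.normalizer_le_normalizer_inf_of_normal {G : Type*} [Group G] (N H : Subgroup G)
    [N.Normal] : normalizer (H : Set G) ≤ normalizer ((N ⊓ H : Subgroup G) : Set G) :=
  (le_inf le_normalizer_of_normal le_rfl).trans inf_normalizer_le_normalizer_inf

theorem stmt5_general {A : Type*} [Group A] (S : Subgroup A) [S.Normal]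
    (hidx : ∃ k : ℕ, S.index = 2 ^ k) (Q : Sylow 2 A)
    (hself : S ⊓ Subgroup.normalizer ((S ⊓ (Q : Subgroup A) : Subgroup A) : Set A) = S ⊓ (Q : Subgroup A)) :
    Subgroup.normalizer ((Q : Subgroup A) : Set A) = (Q : Subgroup A) := by
  obtain ⟨k, hk⟩ := hidx
  refine le_antisymm (fun x hx => Q.mem_of_mem_normalizer_of_pow_mem hx (k := k) ?_) le_normalizer
  have hxk : x ^ 2 ^ k ∈ S ⊓ normalizer ((S ⊓ (Q : Subgroup A) : Subgroup A) : Set A) :=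
    ⟨hk ▸ S.pow_index_mem x, pow_mem (normalizer_le_normalizer_inf_of_normal S Q hx) _⟩
  exact (hself ▸ hxk).2

/-- Let `A` be a finite group, `S` a normal subgroup of `2`-power index, `Q` a Sylow
`2`-subgroup of `A`, and `P = S ⊓ Q`. If `N_S(P) = P`, then `N_A(Q) = Q`. -/
theorem stmt5 {A : Type*} [Group A] [Fintype A] (S : Subgroup A) [S.Normal]
    (hidx : ∃ k : ℕ, S.index = 2 ^ k) (Q : Sylow 2 A)
    (hself : S ⊓ Subgroup.normalizer ((S ⊓ (Q : Subgroup A) : Subgroup A) : Set A) = S ⊓ (Q : Subgroup A)) :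
    Subgroup.normalizer ((Q : Subgroup A) : Set A) = (Q : Subgroup A) :=
  stmt5_general S hidx Q hself
end

section
/- Let A be a finite group, S a normal subgroup of A whose index [A : S] is a power of 2, Q a Sylow 2-subgroup of A, and P = S ∩ Q. Assume that C_S(P) = Z(P), i.e. the centralizer of P in S consists exactly of the elements of the center of P, and that N_S(P) = P ⋊ V for some subgroup V of S of odd order (so P ∩ V = {1} and N_S(P) = P·V). If V' is a normal subgroup of N_A(Q) of odd order with N_A(Q) = Q·V', then V' = {1}; in particular, either N_A(Q) = Q or N_A(Q) has no normal 2-complement. -/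
/-!
A normal subgroup `W` of `N_A(Q)` of odd order meets the normal `2`-subgroup `Q` of `N_A(Q)`
trivially, so it centralizes `Q`. Its elements have odd order, so they die in the `2`-group
`A ⧸ S` and lie in `S`. Hence `W ≤ C_S(P) = Z(P) ≤ Q`, and a subgroup of odd order inside a
`2`-group is trivial. If moreover `W` had `2`-power index, `N_A(Q)` would be a `2`-group
containing `Q`, so equal to `Q`.
-/

open Subgroup

namespace IsPGroup

variable {G : Type*} [Group G] {p m : ℕ}

theorem le_of_isPGroup_quotient (hmp : m.Coprime p) {S : Subgroup G} [S.Normal]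
    (hS : IsPGroup p (G ⧸ S)) {H : Subgroup G} (hH : IsPGroup m H) : H ≤ S := by
  have hdisj : Disjoint (H.map (QuotientGroup.mk' S)) (H.map (QuotientGroup.mk' S)) :=
    disjoint_of_coprime (hH.map _) (hS.to_subgroup _) hmp
  rwa [disjoint_self, ← le_bot_iff, map_le_iff_le_comap, MonoidHom.comap_bot,
    QuotientGroup.ker_mk'] at hdisj

theorem map_subtype_le_centralizer_of_normal (hmp : m.Coprime p) {Q : Subgroup G}
    (hQ : IsPGroup p Q) {W : Subgroup (normalizer (Q : Set G))} [hWn : W.Normal]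
    (hW : IsPGroup m W) :
    W.map (normalizer (Q : Set G)).subtype ≤ centralizer (Q : Set G) := by
  rintro _ ⟨w, hw, rfl⟩
  rw [mem_centralizer_iff]
  intro q hq
  have hdisj : Disjoint W (Q.subgroupOf (normalizer (Q : Set G))) :=
    disjoint_of_coprime hW hQ.comap_subtype hmp
  exact congrArg Subtype.val
    (commute_of_normal_of_disjoint _ _ hWn normal_in_normalizer hdisj w ⟨q, le_normalizer hq⟩ hw
      hq).symm

theorem eq_bot_of_normal_of_centralizer_inf_le (hmp : m.Coprime p) {S : Subgroup G} [S.Normal]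
    (hS : IsPGroup p (G ⧸ S)) {Q : Subgroup G} (hQ : IsPGroup p Q)
    (hC : S ⊓ centralizer ((S ⊓ Q : Subgroup G) : Set G) ≤ S ⊓ Q)
    {W : Subgroup (normalizer (Q : Set G))} [W.Normal] (hW : IsPGroup m W) : W = ⊥ := by
  set W₀ := W.map (normalizer (Q : Set G)).subtype
  have hW₀ : IsPGroup m W₀ := hW.map _
  have hW₀S : W₀ ≤ S := le_of_isPGroup_quotient hmp hS hW₀
  have hW₀C : W₀ ≤ centralizer ((S ⊓ Q : Subgroup G) : Set G) :=
    (map_subtype_le_centralizer_of_normal hmp hQ hW).trans (centralizer_le inf_le_right)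
  have hW₀Q : W₀ ≤ Q := (le_inf hW₀S hW₀C).trans (hC.trans inf_le_right)
  have hW₀bot : W₀ = ⊥ := disjoint_self.mp ((disjoint_of_coprime hW₀ hQ hmp).mono_right hW₀Q)
  exact (map_eq_bot_iff_of_injective W (subtype_injective _)).mp hW₀bot

end IsPGroup

theorem Sylow.normalizer_eq_self_of_isPGroup {G : Type*} [Group G] {p : ℕ} (P : Sylow p G)
    (h : IsPGroup p (normalizer (P : Set G))) : normalizer (P : Set G) = P :=
  P.3 h le_normalizer

theorem stmt6_general {A : Type*} [Group A] (S : Subgroup A) [S.Normal]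
    (hidx : ∃ k : ℕ, S.index = 2 ^ k) (Q : Sylow 2 A)
    (hcent : S ⊓ Subgroup.centralizer ((S ⊓ (Q : Subgroup A) : Subgroup A) : Set A) =
      (S ⊓ (Q : Subgroup A)) ⊓
        Subgroup.centralizer ((S ⊓ (Q : Subgroup A) : Subgroup A) : Set A)) :
    (∀ V' : Subgroup ↥(Subgroup.normalizer ((Q : Subgroup A) : Set A)), V'.Normal → Odd (Nat.card V') →
      (∀ x : ↥(Subgroup.normalizer ((Q : Subgroup A) : Set A)),
        ∃ q ∈ (Q : Subgroup A).subgroupOf (Subgroup.normalizer ((Q : Subgroup A) : Set A)),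
          ∃ v ∈ V', x = q * v) →
      V' = ⊥) ∧
    (Subgroup.normalizer ((Q : Subgroup A) : Set A) = (Q : Subgroup A) ∨
      ¬ ∃ W : Subgroup ↥(Subgroup.normalizer ((Q : Subgroup A) : Set A)), W.Normal ∧ Odd (Nat.card W) ∧
          ∃ k : ℕ, W.index = 2 ^ k) := by
  have hquot : IsPGroup 2 (A ⧸ S) := let ⟨_, hk⟩ := hidx; IsPGroup.of_card hk
  have hodd_bot : ∀ W : Subgroup (normalizer ((Q : Subgroup A) : Set A)), W.Normal →
      Odd (Nat.card W) → W = ⊥ := fun W _ hW =>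
    IsPGroup.eq_bot_of_normal_of_centralizer_inf_le (Nat.coprime_two_right.mpr hW) hquot Q.2
      (hcent.le.trans inf_le_left) IsPGroup.card
  refine ⟨fun V' hV' hodd _ => hodd_bot V' hV' hodd,
    or_iff_not_imp_right.mpr fun hW => Q.normalizer_eq_self_of_isPGroup ?_⟩
  obtain ⟨W, hWn, hWodd, k, hk⟩ := not_not.mp hW
  rw [hodd_bot W hWn hWodd, index_bot] at hk
  exact IsPGroup.of_card hk

/-- Let `A` be a finite group, `S` a normal subgroup of `2`-power index, `Q` a Sylow
`2`-subgroup of `A`, and `P = S ⊓ Q`. Assume `C_S(P) = Z(P)` and `N_S(P) = P ⋊ V` with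
`V ≤ S` of odd order. If `V'` is a normal subgroup of `N_A(Q)` of odd order with
`N_A(Q) = Q * V'`, then `V' = ⊥`; in particular either `N_A(Q) = Q` or `N_A(Q)` has no
normal `2`-complement. -/
theorem stmt6 {A : Type*} [Group A] [Fintype A] (S : Subgroup A) [S.Normal]
    (hidx : ∃ k : ℕ, S.index = 2 ^ k) (Q : Sylow 2 A) (V : Subgroup A) (hVS : V ≤ S)
    (hVodd : Odd (Nat.card V))
    (hcent : S ⊓ Subgroup.centralizer ((S ⊓ (Q : Subgroup A) : Subgroup A) : Set A) =
      (S ⊓ (Q : Subgroup A)) ⊓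
        Subgroup.centralizer ((S ⊓ (Q : Subgroup A) : Subgroup A) : Set A))
    (hPV : (S ⊓ (Q : Subgroup A)) ⊓ V = ⊥)
    (hNSP : ∀ x : A, x ∈ S ⊓ Subgroup.normalizer ((S ⊓ (Q : Subgroup A) : Subgroup A) : Set A) ↔
      ∃ p ∈ S ⊓ (Q : Subgroup A), ∃ v ∈ V, x = p * v) :
    (∀ V' : Subgroup ↥(Subgroup.normalizer ((Q : Subgroup A) : Set A)), V'.Normal → Odd (Nat.card V') →
      (∀ x : ↥(Subgroup.normalizer ((Q : Subgroup A) : Set A)),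
        ∃ q ∈ (Q : Subgroup A).subgroupOf (Subgroup.normalizer ((Q : Subgroup A) : Set A)),
          ∃ v ∈ V', x = q * v) →
      V' = ⊥) ∧
    (Subgroup.normalizer ((Q : Subgroup A) : Set A) = (Q : Subgroup A) ∨
      ¬ ∃ W : Subgroup ↥(Subgroup.normalizer ((Q : Subgroup A) : Set A)), W.Normal ∧ Odd (Nat.card W) ∧
          ∃ k : ℕ, W.index = 2 ^ k) :=
  stmt6_general S hidx Q hcent
end

section
/- Let G be a finite group and N a normal subgroup of G whose index [G : N] is a power of 2. If χ is the character of an irreducible complex representation of G whose degree χ(1) is odd, then the restriction of χ to N is again the character of an irreducible complex representation of N, of the same degree. Equivalently: the restriction to N of any irreducible complex representation of G of odd dimension is irreducible. -/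
/-!
Induction on the exponent. A normal subgroup `N` of index `2 ^ (n + 1)` lies in a subgroup `M`
of index `2` (the preimage of a subgroup of index `2` of the `2`-group `G ⧸ N`), so it suffices
to pass irreducibility from `G` to a subgroup `H` of index two. Let `W` be an `H`-invariant
subspace and `g ∉ H`. As `H` is normal and `g ^ 2 ∈ H`, both `W ⊓ g W` and `W ⊔ g W` are
`G`-invariant, hence `⊥` or `⊤`. Unless `W` is `⊥` or `⊤`, this forces `V = W ⊕ g W`,
whose dimension `2 dim W` is even.
-/

open Module

theorem Submodule.even_finrank_of_isCompl_of_finrank_eq {K V : Type*} [DivisionRing K]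
    [AddCommGroup V] [Module K V] [FiniteDimensional K V] {U W : Submodule K V}
    (hUW : IsCompl U W) (h : finrank K U = finrank K W) : Even (finrank K V) :=
  ⟨finrank K U, by rw [← Submodule.finrank_add_eq_of_isCompl hUW, h]⟩

theorem Subgroup.exists_le_index_eq_of_index_eq_pow_succ {G : Type*} [Group G] {p : ℕ}
    [Fact p.Prime] {N : Subgroup G} [N.Normal] {n : ℕ} (hN : N.index = p ^ (n + 1)) :
    ∃ M : Subgroup G, N ≤ M ∧ M.index = p := by
  have hp := (Fact.out : p.Prime).pos
  have : Finite (G ⧸ N) :=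
    Nat.finite_of_card_ne_zero (show N.index ≠ 0 by rw [hN]; positivity)
  obtain ⟨K, hK⟩ := Sylow.exists_subgroup_card_pow_prime (G := G ⧸ N) p
    (show p ^ n ∣ N.index by rw [hN]; exact pow_dvd_pow p n.le_succ)
  refine ⟨K.comap (QuotientGroup.mk' N),
    (QuotientGroup.ker_mk' N).ge.trans (MonoidHom.ker_le_comap _ K), ?_⟩
  rw [Subgroup.index_comap_of_surjective K (QuotientGroup.mk'_surjective N)]
  have hcard : Nat.card K * K.index = p ^ n * p := by rw [K.card_mul_index, ← pow_succ]; exact hN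
  rw [hK] at hcard
  exact Nat.eq_of_mul_eq_mul_left (by positivity) hcard

namespace Representation

variable {k G V : Type*} [Field k] [Group G] [AddCommGroup V] [Module k V]
  (ρ : Representation k G V)

theorem isIrreducible_iff :
    ρ.IsIrreducible ↔
      Nontrivial V ∧ ∀ p : Submodule k V, p ∈ ρ.invtSubmodule → p = ⊥ ∨ p = ⊤ := by
  rw [irreducible_iff_isSimpleModule_asModule, isSimpleModule_iff,
    ← ρ.mapSubmodule.isSimpleOrder_iff, isSimpleOrder_iff, invtSubmodule.nontrivial_iff]
  refine and_congr_right fun _ => ⟨fun h p hp => ?_, fun h p => ?_⟩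
  · exact (h ⟨p, hp⟩).imp (congrArg Subtype.val) (congrArg Subtype.val)
  · exact (h p p.2).imp Subtype.ext Subtype.ext

theorem mem_invtSubmodule_iff_map_le {p : Submodule k V} :
    p ∈ ρ.invtSubmodule ↔ ∀ g, p.map (ρ g) ≤ p := by
  simp only [mem_invtSubmodule, Module.End.mem_invtSubmodule_iff_map_le]

theorem mem_invtSubmodule_comp_subtype {H : Subgroup G} {p : Submodule k V} :
    p ∈ invtSubmodule (ρ.comp H.subtype) ↔ ∀ h ∈ H, p.map (ρ h) ≤ p := by
  simp [mem_invtSubmodule_iff_map_le]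

theorem map_map_eq_map_mul (p : Submodule k V) (a b : G) :
    (p.map (ρ a)).map (ρ b) = p.map (ρ (b * a)) := by
  rw [map_mul, Module.End.mul_eq_comp, Submodule.map_comp]

theorem map_mem_invtSubmodule_comp_subtype {H : Subgroup G} [H.Normal] {p : Submodule k V}
    (hp : p ∈ invtSubmodule (ρ.comp H.subtype)) (g : G) :
    p.map (ρ g) ∈ invtSubmodule (ρ.comp H.subtype) := by
  rw [mem_invtSubmodule_comp_subtype] at hp ⊢
  intro h hh
  have hconj : g⁻¹ * h * g ∈ H := by simpa using ‹H.Normal›.conj_mem h hh g⁻¹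
  calc (p.map (ρ g)).map (ρ h) = (p.map (ρ (g⁻¹ * h * g))).map (ρ g) := by
        simp only [map_map_eq_map_mul, mul_assoc, mul_inv_cancel_left]
    _ ≤ p.map (ρ g) := Submodule.map_mono (hp _ hconj)

theorem mem_invtSubmodule_of_index_eq_two {H : Subgroup G} (hH : H.index = 2) {g : G}
    (hg : g ∉ H) {p : Submodule k V} (hp : p ∈ invtSubmodule (ρ.comp H.subtype))
    (hgp : p.map (ρ g) ≤ p) : p ∈ ρ.invtSubmodule := by
  rw [mem_invtSubmodule_comp_subtype] at hp
  refine (mem_invtSubmodule_iff_map_le ρ).2 fun x => ?_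
  by_cases hx : x ∈ H
  · exact hp x hx
  have hgx : g⁻¹ * x ∈ H :=
    (Subgroup.mul_mem_iff_of_index_two hH).2 (iff_of_false (by simpa using hg) hx)
  calc p.map (ρ x) = (p.map (ρ (g⁻¹ * x))).map (ρ g) := by
        rw [map_map_eq_map_mul, mul_inv_cancel_left]
    _ ≤ p.map (ρ g) := Submodule.map_mono (hp _ hgx)
    _ ≤ p := hgp

theorem isIrreducible_comp_subtype_subgroupOf_iff {H K : Subgroup G} (hHK : H ≤ K) :
    IsIrreducible ((ρ.comp K.subtype).comp (H.subgroupOf K).subtype) ↔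
      IsIrreducible (ρ.comp H.subtype) := by
  have : invtSubmodule ((ρ.comp K.subtype).comp (H.subgroupOf K).subtype) =
      invtSubmodule (ρ.comp H.subtype) := by
    refine Sublattice.ext fun p => ?_
    simp only [mem_invtSubmodule_comp_subtype, Subgroup.mem_subgroupOf]
    exact ⟨fun h x hx => h ⟨x, hHK hx⟩ hx, fun h x hx => h x hx⟩
  rw [isIrreducible_iff, isIrreducible_iff, this]

variable {ρ}

theorem IsIrreducible.comp_subtype_of_index_eq_two (hρ : ρ.IsIrreducible) {H : Subgroup G}
    (hH : H.index = 2) (hodd : Odd (finrank k V)) : IsIrreducible (ρ.comp H.subtype) := by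
  have : H.Normal := Subgroup.normal_of_index_eq_two hH
  have : FiniteDimensional k V := Module.finite_of_finrank_pos hodd.pos
  rw [isIrreducible_iff] at hρ ⊢
  refine ⟨hρ.1, fun W hW => ?_⟩
  obtain ⟨g, -, hg⟩ : ∃ g ∈ (⊤ : Subgroup G), g ∉ H :=
    SetLike.exists_of_lt (lt_top_iff_ne_top.2 fun h => by simp [h] at hH)
  set W' := W.map (ρ g)
  have hW' := ρ.map_mem_invtSubmodule_comp_subtype hW g
  have hW'W : W'.map (ρ g) ≤ W := by
    rw [map_map_eq_map_mul]
    exact (mem_invtSubmodule_comp_subtype ρ).1 hW _ (Subgroup.mul_self_mem_of_index_two hH g)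
  have hG : ∀ U ∈ invtSubmodule (ρ.comp H.subtype), U.map (ρ g) ≤ U →
      U = ⊥ ∨ U = ⊤ :=
    fun U hU hgU => hρ.2 U (ρ.mem_invtSubmodule_of_index_eq_two hH hg hU hgU)
  rcases hG (W ⊓ W') (Sublattice.inf_mem hW hW')
      (le_inf ((Submodule.map_mono inf_le_right).trans hW'W) (Submodule.map_mono inf_le_left))
    with hinf | hinf
  · rcases hG (W ⊔ W') (Sublattice.sup_mem hW hW')
        (by rw [Submodule.map_sup]; exact sup_le le_sup_right (hW'W.trans le_sup_left))
      with hsup | hsup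
    · exact .inl (le_bot_iff.1 (hsup ▸ le_sup_left))
    · have hrank : finrank k W = finrank k W' :=
        (Submodule.equivMapOfInjective _ (ρ.apply_bijective g).injective W).finrank_eq
      exact absurd (Submodule.even_finrank_of_isCompl_of_finrank_eq (.of_eq hinf hsup) hrank)
        (Nat.not_even_iff_odd.2 hodd)
  · exact .inr (top_le_iff.1 (hinf ▸ inf_le_left))

theorem IsIrreducible.comp_subtype_of_index_eq_two_pow (hρ : ρ.IsIrreducible)
    (hodd : Odd (finrank k V)) {N : Subgroup G} [N.Normal] {n : ℕ} (hN : N.index = 2 ^ n) :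
    IsIrreducible (ρ.comp N.subtype) := by
  induction n generalizing G with
  | zero =>
    rw [pow_zero, Subgroup.index_eq_one] at hN
    rw [isIrreducible_iff] at hρ ⊢
    refine ⟨hρ.1, fun p hp => hρ.2 p ((mem_invtSubmodule_iff_map_le ρ).2 fun g => ?_)⟩
    exact (mem_invtSubmodule_comp_subtype ρ).1 hp g (hN ▸ Subgroup.mem_top g)
  | succ n ih =>
    obtain ⟨M, hNM, hM⟩ := Subgroup.exists_le_index_eq_of_index_eq_pow_succ hN
    have hNM' : (N.subgroupOf M).index = 2 ^ n := by
      have := Subgroup.relIndex_mul_index hNM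
      rw [hM, hN, pow_succ] at this
      exact Nat.eq_of_mul_eq_mul_right two_pos this
    exact (isIrreducible_comp_subtype_subgroupOf_iff ρ hNM).1
      (ih (hρ.comp_subtype_of_index_eq_two hM hodd) hNM')

end Representation

theorem stmt8_general {G : Type*} [Group G] (N : Subgroup G) [N.Normal]
    (hidx : ∃ k : ℕ, N.index = 2 ^ k)
    {V : Type*} [AddCommGroup V] [Module ℂ V]
    (ρ : Representation ℂ G V)
    (hirr : IsSimpleModule (MonoidAlgebra ℂ G) ρ.asModule)
    (hodd : Odd (Module.finrank ℂ V)) :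
    IsSimpleModule (MonoidAlgebra ℂ ↥N)
      (Representation.asModule (ρ.comp N.subtype : Representation ℂ ↥N V)) := by
  obtain ⟨k, hk⟩ := hidx
  rw [← Representation.irreducible_iff_isSimpleModule_asModule] at hirr ⊢
  exact hirr.comp_subtype_of_index_eq_two_pow hodd hk

/-- Let `G` be a finite group and `N` a normal subgroup of `2`-power index. The
restriction to `N` of any irreducible complex representation of `G` of odd dimension is
irreducible. Irreducibility of a representation `ρ` is expressed as simplicity of the
associated module over the monoid algebra. -/
theorem stmt8 {G : Type*} [Group G] [Fintype G] (N : Subgroup G) [N.Normal]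
    (hidx : ∃ k : ℕ, N.index = 2 ^ k)
    {V : Type*} [AddCommGroup V] [Module ℂ V] [FiniteDimensional ℂ V]
    (ρ : Representation ℂ G V)
    (hirr : IsSimpleModule (MonoidAlgebra ℂ G) ρ.asModule)
    (hodd : Odd (Module.finrank ℂ V)) :
    IsSimpleModule (MonoidAlgebra ℂ ↥N)
      (Representation.asModule (ρ.comp N.subtype : Representation ℂ ↥N V)) :=
  stmt8_general N hidx ρ hirr hodd
end
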